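/- arXiv:1709.03294 — 3 statements merged into one kernel-verified Lean document; each statement's English description precedes it below -/
import Mathlib

section
/- Let f(x) = a + b·x^β + c·x^γ be a polynomial with integer coefficients a, b, c and natural number exponents 1 ≤ β < γ satisfying γ ≥ 2β. If m > 0 is a real number with f′(m) = 0, then sup_{x ∈ [0, m]} |f′(x)| ≤ b²·β. -/
/-! At a positive critical point `m` the relation `c γ m^(γ-1) = -b β m^(β-1)` turns the derivative
into `f' x = b β m^(β-1) ((x/m)^(β-1) - (x/m)^(γ-1))`, so `|f'| ≤ |b| β m^(β-1)` on `[0, m]`.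
The same relation reads `|c| γ m^(γ-β) = |b| β`; as `c` is then a nonzero integer, `m^(γ-β) ≤ |b|`,
and `β - 1 ≤ γ - β` upgrades this to `m^(β-1) ≤ |b|` (trivially so when `m ≤ 1`). -/

open Set

theorem hasDerivAt_trinomial (a b c : ℝ) (β γ : ℕ) (x : ℝ) :
    HasDerivAt (fun x => a + b * x ^ β + c * x ^ γ)
      (b * β * x ^ (β - 1) + c * γ * x ^ (γ - 1)) x :=
  ((((hasDerivAt_pow β x).const_mul b).const_add a).add
    ((hasDerivAt_pow γ x).const_mul c)).congr_deriv (by ring)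

theorem abs_pow_sub_pow_le_one {t : ℝ} (ht : t ∈ Icc 0 1) (p q : ℕ) : |t ^ p - t ^ q| ≤ 1 :=
  Real.dist_le_of_mem_Icc_01 ⟨pow_nonneg ht.1 p, pow_le_one₀ ht.1 ht.2⟩
    ⟨pow_nonneg ht.1 q, pow_le_one₀ ht.1 ht.2⟩

section Critical

variable {b c m : ℝ} {β γ : ℕ}

theorem trinomial_deriv_eq_of_critical (hm : 0 < m)
    (hcrit : b * β * m ^ (β - 1) + c * γ * m ^ (γ - 1) = 0) (x : ℝ) :
    b * β * x ^ (β - 1) + c * γ * x ^ (γ - 1) =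
      b * β * m ^ (β - 1) * ((x / m) ^ (β - 1) - (x / m) ^ (γ - 1)) := by
  rw [div_pow, div_pow]
  field_simp
  linear_combination x ^ (γ - 1) * hcrit

theorem abs_trinomial_deriv_le_of_critical (hm : 0 < m)
    (hcrit : b * β * m ^ (β - 1) + c * γ * m ^ (γ - 1) = 0) {x : ℝ} (hx : x ∈ Icc 0 m) :
    |b * β * x ^ (β - 1) + c * γ * x ^ (γ - 1)| ≤ |b| * β * m ^ (β - 1) := by
  have hxm : x / m ∈ Icc 0 1 :=
    ⟨div_nonneg hx.1 hm.le, (div_le_one hm).mpr hx.2⟩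
  rw [trinomial_deriv_eq_of_critical hm hcrit, abs_mul, abs_mul, abs_mul, Nat.abs_cast,
    abs_of_pos (pow_pos hm _)]
  exact mul_le_of_le_one_right (by positivity) (abs_pow_sub_pow_le_one hxm _ _)

end Critical

theorem pow_le_of_pow_le_of_one_le {m B : ℝ} {k n : ℕ} (hm : 0 ≤ m) (hB : 1 ≤ B) (hkn : k ≤ n)
    (h : m ^ n ≤ B) : m ^ k ≤ B := by
  rcases le_or_gt m 1 with hm1 | hm1
  · exact (pow_le_one₀ hm hm1).trans hB
  · exact (pow_le_pow_right₀ hm1.le hkn).trans h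

theorem pow_pred_le_abs_of_critical {b c : ℤ} {β γ : ℕ} {m : ℝ} (hm : 0 < m) (hβ : 0 < β)
    (hβγ : 2 * β ≤ γ + 1) (hb : b ≠ 0)
    (hcrit : (b : ℝ) * β * m ^ (β - 1) + c * γ * m ^ (γ - 1) = 0) :
    m ^ (β - 1) ≤ |(b : ℝ)| := by
  have hb₁ : (1 : ℝ) ≤ |(b : ℝ)| := by exact_mod_cast Int.one_le_abs hb
  have hγ : (0 : ℝ) < γ := by exact_mod_cast (by omega : 0 < γ)
  have hrel : |(c : ℝ)| * γ * m ^ (γ - β) = |(b : ℝ)| * β := by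
    have hsplit : m ^ (γ - 1) = m ^ (β - 1) * m ^ (γ - β) := by
      rw [← pow_add]; congr 1; omega
    have : (c : ℝ) * γ * m ^ (γ - β) = -(b * β) := by
      apply mul_right_cancel₀ (pow_pos hm (β - 1)).ne'
      linear_combination hcrit - c * γ * hsplit
    simpa only [abs_mul, abs_neg, Nat.abs_cast, abs_of_pos (pow_pos hm _)] using
      congrArg abs this
  have hc : c ≠ 0 := by
    rintro rfl
    have : (0 : ℝ) < |(b : ℝ)| * β := by positivity
    simp [← hrel] at this
  have hc₁ : (1 : ℝ) ≤ |(c : ℝ)| := by exact_mod_cast Int.one_le_abs hc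
  have hmγ : m ^ (γ - β) ≤ |(b : ℝ)| := by
    have hβγ' : (β : ℝ) ≤ γ := by exact_mod_cast (by omega : β ≤ γ)
    refine le_of_mul_le_mul_left ?_ hγ
    calc (γ : ℝ) * m ^ (γ - β) ≤ |(c : ℝ)| * γ * m ^ (γ - β) := by
          rw [mul_assoc]; exact le_mul_of_one_le_left (by positivity) hc₁
      _ = |(b : ℝ)| * β := hrel
      _ ≤ γ * |(b : ℝ)| := by rw [mul_comm]; gcongr
  exact pow_le_of_pow_le_of_one_le hm.le hb₁ (by omega) hmγ

theorem abs_mul_pow_pred_le_of_critical {b c : ℤ} {β γ : ℕ} {m : ℝ} (hm : 0 < m)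
    (hβγ : 2 * β ≤ γ + 1) (hcrit : (b : ℝ) * β * m ^ (β - 1) + c * γ * m ^ (γ - 1) = 0) :
    |(b : ℝ)| * β * m ^ (β - 1) ≤ b ^ 2 * β := by
  rcases eq_or_ne b 0 with rfl | hb
  · simp
  rcases Nat.eq_zero_or_pos β with rfl | hβ
  · simp
  calc |(b : ℝ)| * β * m ^ (β - 1)
      ≤ |(b : ℝ)| * β * |(b : ℝ)| := by
        gcongr; exact pow_pred_le_abs_of_critical hm hβ hβγ hb hcrit
    _ = b ^ 2 * β := by rw [mul_right_comm, ← sq, sq_abs]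

theorem trinomial_derivative_sup_bound_general (a b c : ℤ) (β γ : ℕ)
    (hγ2β : 2 * β ≤ γ)
    (f : ℝ → ℝ)
    (hf : f = fun x => (a : ℝ) + (b : ℝ) * x ^ β + (c : ℝ) * x ^ γ)
    (m : ℝ) (hm : 0 < m) (hm' : deriv f m = 0) :
    sSup ((fun x => |deriv f x|) '' Set.Icc 0 m) ≤ (b : ℝ) ^ 2 * (β : ℝ) := by
  have hderiv (x : ℝ) : deriv f x = b * β * x ^ (β - 1) + c * γ * x ^ (γ - 1) :=
    hf ▸ (hasDerivAt_trinomial a b c β γ x).deriv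
  have hcrit := (hderiv m).symm.trans hm'
  refine Real.sSup_le ?_ (by positivity)
  rintro _ ⟨x, hx, rfl⟩
  show |deriv f x| ≤ _
  rw [hderiv x]
  exact (abs_trinomial_deriv_le_of_critical hm hcrit hx).trans
    (abs_mul_pow_pred_le_of_critical hm (by omega) hcrit)

/-- Lemma 7 of the paper: bound on the derivative of a trinomial on `[0, m]`
where `m` is a positive critical point, under the assumption `γ ≥ 2β`. -/
theorem trinomial_derivative_sup_bound (a b c : ℤ) (β γ : ℕ)
    (hβ : 1 ≤ β) (hβγ : β < γ) (hγ2β : 2 * β ≤ γ)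
    (f : ℝ → ℝ)
    (hf : f = fun x => (a : ℝ) + (b : ℝ) * x ^ β + (c : ℝ) * x ^ γ)
    (m : ℝ) (hm : 0 < m) (hm' : deriv f m = 0) :
    sSup ((fun x => |deriv f x|) '' Set.Icc 0 m) ≤ (b : ℝ) ^ 2 * (β : ℝ) :=
  trinomial_derivative_sup_bound_general a b c β γ hγ2β f hf m hm hm'
end

section
/- Let f(x) = a + b·x^β + c·x^γ be a polynomial with nonzero integer coefficients a, b, c and natural number exponents 1 ≤ β < γ. If a and c have opposite signs (i.e., a·c < 0), then f has exactly one positive real root. -/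
/-!
Negating the equation, we may take a > 0 > c. For x > 0 the trinomial equals
x^β · (a / x^β + b + c x^(γ-β)), and the second factor is strictly decreasing on (0, ∞),
so there is at most one positive root. One exists by the intermediate value theorem:
the trinomial is a > 0 at 0 and negative once x ≥ 1 and a + |b| + c x < 0.
-/

open Set

section

variable {A B C x : ℝ} {β γ : ℕ}

theorem strictAntiOn_div_pow_add_mul_pow (hA : 0 ≤ A) (hC : C < 0) (hβγ : β < γ) :
    StrictAntiOn (fun x : ℝ => A / x ^ β + B + C * x ^ (γ - β)) (Ioi 0) := by
  intro x (hx : 0 < x) y _ hxy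
  have hdiv : A / y ^ β ≤ A / x ^ β := by gcongr
  have hpow : C * y ^ (γ - β) < C * x ^ (γ - β) :=
    mul_lt_mul_of_neg_left (pow_lt_pow_left₀ hxy (le_of_lt hx) (by omega)) hC
  simp only
  linarith

theorem trinomial_eq_pow_mul (hx : x ≠ 0) (hβγ : β ≤ γ) :
    A + B * x ^ β + C * x ^ γ = x ^ β * (A / x ^ β + B + C * x ^ (γ - β)) := by
  rw [mul_add, mul_add, mul_div_cancel₀ _ (pow_ne_zero β hx), mul_left_comm, ← pow_add,
    Nat.add_sub_cancel' hβγ]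
  ring

theorem trinomial_posRoots_subsingleton (hA : 0 ≤ A) (hC : C < 0) (hβγ : β < γ) :
    {x : ℝ | 0 < x ∧ A + B * x ^ β + C * x ^ γ = 0}.Subsingleton := by
  have hroot : ∀ x, 0 < x ∧ A + B * x ^ β + C * x ^ γ = 0 ↔
      x ∈ Ioi 0 ∧ A / x ^ β + B + C * x ^ (γ - β) = 0 := fun x => by
    refine and_congr_right fun hx => ?_
    rw [trinomial_eq_pow_mul hx.ne' hβγ.le, mul_eq_zero, or_iff_right (pow_ne_zero β hx.ne')]
  intro x hx y hy
  rw [mem_ofPred_eq, hroot] at hx hy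
  exact (strictAntiOn_div_pow_add_mul_pow hA hC hβγ).injOn hx.1 hy.1 (hx.2.trans hy.2.symm)

theorem trinomial_neg_of_one_le (hA : 0 ≤ A) (hC : C ≤ 0) (hβγ : β < γ) (hx : 1 ≤ x)
    (h : A + |B| + C * x < 0) : A + B * x ^ β + C * x ^ γ < 0 := by
  have hxβ : 0 < x ^ β := pow_pos (by linarith) β
  have hA' : A ≤ A * x ^ β := le_mul_of_one_le_right hA (one_le_pow₀ hx)
  have hB' : B * x ^ β ≤ |B| * x ^ β := by gcongr; exact le_abs_self B
  have hC' : C * x ^ γ ≤ C * x * x ^ β := by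
    rw [mul_assoc, ← pow_succ']
    exact mul_le_mul_of_nonpos_left (pow_le_pow_right₀ hx hβγ) hC
  nlinarith [mul_neg_of_neg_of_pos h hxβ]

theorem trinomial_exists_pos_root (hA : 0 < A) (hC : C < 0) (hβ : 1 ≤ β) (hβγ : β < γ) :
    ∃ x, 0 < x ∧ A + B * x ^ β + C * x ^ γ = 0 := by
  set M := 1 + (A + |B|) / -C
  have hM : 1 ≤ M := le_add_of_nonneg_right (div_nonneg (by positivity) (by linarith))
  have hfM : A + B * M ^ β + C * M ^ γ < 0 := by
    refine trinomial_neg_of_one_le hA.le hC.le hβγ hM ?_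
    have : C * ((A + |B|) / -C) = -(A + |B|) := by field_simp [hC.ne]
    simp only [M, mul_add, this]
    linarith
  have hf0 : A + B * 0 ^ β + C * 0 ^ γ = A := by
    simp [zero_pow (by omega : β ≠ 0), zero_pow (by omega : γ ≠ 0)]
  obtain ⟨x, hx, hfx⟩ := intermediate_value_Ioo' (by linarith : (0:ℝ) ≤ M)
    (Continuous.continuousOn (f := fun x : ℝ => A + B * x ^ β + C * x ^ γ) (by fun_prop))
    (show (0:ℝ) ∈ Ioo _ _ from ⟨hfM, by rwa [hf0]⟩)
  exact ⟨x, hx.1, hfx⟩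

theorem trinomial_existsUnique_pos_root (hAC : A * C < 0) (hβ : 1 ≤ β) (hβγ : β < γ) :
    ∃! x, 0 < x ∧ A + B * x ^ β + C * x ^ γ = 0 := by
  wlog hA : 0 < A generalizing A B C
  · have hneg : ∀ x : ℝ, 0 < x ∧ -A + -B * x ^ β + -C * x ^ γ = 0 ↔
        0 < x ∧ A + B * x ^ β + C * x ^ γ = 0 := fun x => by
      refine and_congr_right fun _ => ?_
      rw [← neg_eq_zero]; ring_nf
    have hA' : A < 0 := lt_of_le_of_ne (not_lt.1 hA) (left_ne_zero_of_mul hAC.ne)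
    exact (existsUnique_congr hneg).1 (this (by rwa [neg_mul_neg]) (neg_pos.2 hA'))
  have hC : C < 0 := neg_of_mul_neg_right hAC hA.le
  obtain ⟨x, hx⟩ := trinomial_exists_pos_root (B := B) hA hC hβ hβγ
  exact ⟨x, hx, fun y hy => trinomial_posRoots_subsingleton hA.le hC hβγ hy hx⟩

end

theorem trinomial_one_positive_root_general (a b c : ℤ) (β γ : ℕ)
    (hac : a * c < 0)
    (hβ : 1 ≤ β) (hβγ : β < γ) :
    ∃! x : ℝ, 0 < x ∧ (a : ℝ) + (b : ℝ) * x ^ β + (c : ℝ) * x ^ γ = 0 :=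
  trinomial_existsUnique_pos_root (by exact_mod_cast hac) hβ hβγ

/-- A trinomial whose extreme coefficients have opposite signs has exactly one
positive real root (Section 3 of the paper). -/
theorem trinomial_one_positive_root (a b c : ℤ) (β γ : ℕ)
    (ha : a ≠ 0) (hb : b ≠ 0) (hc : c ≠ 0) (hac : a * c < 0)
    (hβ : 1 ≤ β) (hβγ : β < γ) :
    ∃! x : ℝ, 0 < x ∧ (a : ℝ) + (b : ℝ) * x ^ β + (c : ℝ) * x ^ γ = 0 :=
  trinomial_one_positive_root_general a b c β γ hac hβ hβγ
end

section
/- Let f(x) = a·x^α + b·x^β + c·x^γ be a polynomial with integer coefficients a, b, c and natural number exponents α < β < γ, where f is not identically zero. Then f has at most two positive real roots. -/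
/-!
By Descartes' rule of signs (`Polynomial.roots_countP_pos_le_signVariations`) a real polynomial
has at most as many positive roots as its coefficient sequence has sign changes, and the
coefficients of a trinomial have at most three nonzero entries, hence at most two sign changes.
-/

open Polynomial Finset

namespace Polynomial

theorem length_filter_coeffList_ne_zero {R : Type*} [Semiring R] [DecidableEq R] (P : R[X]) :
    (P.coeffList.filter (· ≠ 0)).length = #P.support := by
  rcases eq_or_ne P 0 with rfl | hP
  · simp
  have hsupp : P.support = {n ∈ range (P.natDegree + 1) | P.coeff n ≠ 0} := by
    ext n
    simpa using fun h => Nat.lt_succ_of_le (le_natDegree_of_ne_zero h)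
  rw [hsupp, coeffList, withBotSucc_degree_eq_natDegree_add_one hP, List.filter_map,
    List.length_map, List.filter_reverse, List.length_reverse]
  rfl

theorem signVariations_le_card_support_sub_one {R : Type*} [Semiring R] [LinearOrder R]
    (P : R[X]) : signVariations P ≤ #P.support - 1 := by
  unfold signVariations
  apply Nat.sub_le_sub_right
  calc _ ≤ ((P.coeffList.map SignType.sign).filter (· ≠ 0)).length :=
        (List.destutter_sublist _ _).length_le
    _ = (P.coeffList.filter (· ≠ 0)).length := by
        rw [List.filter_map, List.length_map]
        congr 2
        ext r
        simp
    _ = #P.support := length_filter_coeffList_ne_zero P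

theorem card_le_signVariations {R : Type*} [CommRing R] [LinearOrder R] [IsStrictOrderedRing R]
    {P : R[X]} (hP : P ≠ 0) {s : Finset R} (hs : ∀ x ∈ s, 0 < x ∧ P.IsRoot x) :
    #s ≤ signVariations P := by
  have hsub : s.val ≤ P.roots :=
    (Multiset.le_iff_subset s.nodup).2 fun x hx => (mem_roots hP).2 (hs x hx).2
  calc #s = s.val.countP (0 < ·) := by
        rw [Multiset.countP_eq_card.2 fun x hx => (hs x hx).1]; rfl
    _ ≤ P.roots.countP (0 < ·) := Multiset.countP_le_of_le _ hsub
    _ ≤ signVariations P := roots_countP_pos_le_signVariations P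

end Polynomial

theorem trinomial_at_most_two_positive_roots_general (a b c : ℤ) (α β γ : ℕ)
    (f : Polynomial ℤ)
    (hf : f = Polynomial.C a * Polynomial.X ^ α + Polynomial.C b * Polynomial.X ^ β
        + Polynomial.C c * Polynomial.X ^ γ)
    (hf0 : f ≠ 0) :
    ∀ x y z : ℝ, 0 < x → 0 < y → 0 < z →
      Polynomial.aeval x f = 0 → Polynomial.aeval y f = 0 → Polynomial.aeval z f = 0 →
      x = y ∨ x = z ∨ y = z := by
  intro x y z hx hy hz hfx hfy hfz
  by_contra! ⟨hxy, hxz, hyz⟩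
  set P := f.map (algebraMap ℤ ℝ)
  have hP : P ≠ 0 := (Polynomial.map_ne_zero_iff (RingHom.injective_int _)).2 hf0
  have hroots : ∀ t ∈ ({x, y, z} : Finset ℝ), 0 < t ∧ P.IsRoot t := by
    simp only [Finset.mem_insert, Finset.mem_singleton]
    rintro t (rfl | rfl | rfl) <;> simp_all [P]
  have hsupp : #P.support ≤ 3 := calc
    #P.support ≤ #f.support := card_le_card (support_map_subset _ f)
    _ ≤ #{α, β, γ} := card_le_card (hf ▸ support_trinomial_subset α β γ a b c)
    _ ≤ 3 := card_le_three
  have hthree := card_le_signVariations hP hroots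
  rw [card_eq_three.2 ⟨x, y, z, hxy, hxz, hyz, rfl⟩] at hthree
  have := P.signVariations_le_card_support_sub_one
  omega

/-- Descartes' rule of signs for trinomials: a nonzero trinomial has at most
two positive real roots. -/
theorem trinomial_at_most_two_positive_roots (a b c : ℤ) (α β γ : ℕ)
    (hαβ : α < β) (hβγ : β < γ)
    (f : Polynomial ℤ)
    (hf : f = Polynomial.C a * Polynomial.X ^ α + Polynomial.C b * Polynomial.X ^ β
        + Polynomial.C c * Polynomial.X ^ γ)
    (hf0 : f ≠ 0) :
    ∀ x y z : ℝ, 0 < x → 0 < y → 0 < z →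
      Polynomial.aeval x f = 0 → Polynomial.aeval y f = 0 → Polynomial.aeval z f = 0 →
      x = y ∨ x = z ∨ y = z :=
  trinomial_at_most_two_positive_roots_general a b c α β γ f hf hf0
end
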